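/- With L(f,g) = g_{xx} + (2g_{xy} − f_{xx})p + g_{yy}p², and N the set of series satisfying conditions D1–D4 (K(x,y,0)=0, K_p(0,y,0)=0, K_p(x,0,0)=0, K_{pp}(0,y,0)=0), one has Im(L) ∩ N = {0}: if L(f,g) lies in N for some formal power series pair (f,g), then L(f,g) = 0. -/

import Mathlib

/-! The conditions D1 (on `g_{xx}`) and D2 (on `g_{xy}` along `x = 0`) force every coefficient
of `g` of the form `x^{i+1} y^{j+2}` to vanish. These are exactly the coefficients of `g` that
enter `L(f,g)` at orders `p` (off `y = 0`) and `p²` (off `x = 0`); the remaining coefficients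
of `L(f,g)` are killed directly by D1, D3 and D4. -/

/-- Coefficient of `x^i y^j p^k` in the homological operator
`L(f,g) = g_{xx} + (2 g_{xy} - f_{xx}) p + g_{yy} p²`, where `f ∈ ℝ[[x]]` and
`g ∈ ℝ[[x,y]]` are encoded by their coefficient functions. -/
def Lc (f : ℕ → ℝ) (g : ℕ → ℕ → ℝ) : ℕ → ℕ → ℕ → ℝ := fun i j k =>
  match k with
  | 0 => ((i : ℝ) + 1) * ((i : ℝ) + 2) * g (i + 2) j
  | 1 => 2 * ((i : ℝ) + 1) * ((j : ℝ) + 1) * g (i + 1) (j + 1)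
         - (if j = 0 then ((i : ℝ) + 1) * ((i : ℝ) + 2) * f (i + 2) else 0)
  | 2 => ((j : ℝ) + 1) * ((j : ℝ) + 2) * g i (j + 2)
  | _ => 0

theorem g_succ_add_two_eq_zero_of_Lc (f : ℕ → ℝ) (g : ℕ → ℕ → ℝ)
    (hD1 : ∀ i j : ℕ, Lc f g i j 0 = 0) (hD2 : ∀ j : ℕ, Lc f g 0 j 1 = 0) (i j : ℕ) :
    g (i + 1) (j + 2) = 0 := by
  cases i with
  | zero =>
    have h := hD2 (j + 1)
    simp only [Lc, Nat.add_one_ne_zero, if_false, sub_zero] at h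
    push_cast at h
    simpa [show (j : ℝ) + 1 + 1 ≠ 0 by positivity] using h
  | succ i =>
    have h := hD1 i (j + 2)
    simp only [Lc] at h
    simpa [show (i : ℝ) + 1 ≠ 0 by positivity, show (i : ℝ) + 2 ≠ 0 by positivity] using h

/-- `Im(L) ∩ N = {0}`: if `L(f,g)` satisfies the normal form
conditions D1–D4 (`K(x,y,0)=0`, `K_p(0,y,0)=0`, `K_p(x,0,0)=0`,
`K_{pp}(0,y,0)=0`, expressed on coefficients), then `L(f,g) = 0`. -/
theorem statement9 (f : ℕ → ℝ) (g : ℕ → ℕ → ℝ)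
    (hD1 : ∀ i j : ℕ, Lc f g i j 0 = 0)
    (hD2 : ∀ j : ℕ, Lc f g 0 j 1 = 0)
    (hD3 : ∀ i : ℕ, Lc f g i 0 1 = 0)
    (hD4 : ∀ j : ℕ, Lc f g 0 j 2 = 0) :
    ∀ i j k : ℕ, Lc f g i j k = 0 := by
  have hg := g_succ_add_two_eq_zero_of_Lc f g hD1 hD2
  rintro i j (_ | _ | _ | k)
  · exact hD1 i j
  · cases j with
    | zero => exact hD3 i
    | succ j => simp [Lc, hg i j]
  · cases i with
    | zero => exact hD4 j
    | succ i => simp [Lc, hg i j]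
  · rfl
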